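/- arXiv:2412.14292 — 4 statements merged into one kernel-verified Lean document; each statement's English description precedes it below -/
import Mathlib

section
/- The transcendent p-adic upper half plane Ω_tr, with the subspace topology inherited from ℂ_p, is a Polish space, i.e., it is separable and completely metrizable. -/
/-!
`ℂ_p` is complete, so it suffices that it is separable and that `Ω_tr` is a `G_δ`.

Separability: the elements algebraic over `ℚ` form a countable set, and they are dense. Indeed,
an element `x` algebraic over `ℚ_p` is a root of a monic `f` of degree `n`; replacing the
coefficients of `f` by nearby rationals gives a monic `g ∈ ℚ[X]` with `|g(x)| < ε ^ n`, and since
`|g(x)| = ∏ |x - a|` over the roots `a` of `g`, some root lies within `ε` of `x`. Elements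
algebraic over `ℚ_p` are dense because `ℚ̄_p` is.

`G_δ`: the elements annihilated by a nonzero polynomial of degree `≤ n` are the projection to `ℂ_p` of a closed subset
of `S × ℂ_p`, where `S` is the compact unit sphere of coefficient vectors in `ℚ_p ^ (n + 1)`;
hence they form a closed set, and the algebraic elements an `F_σ`.
-/

open Polynomial Metric Set Topology

theorem Polynomial.aeval_eq_sum_degreeLTEquiv {R A : Type*} [CommRing R] [Semiring A] [Algebra R A]
    {n : ℕ} (p : degreeLT R n) (x : A) :
    aeval x (p : R[X]) = ∑ i, degreeLTEquiv R n p i • x ^ (i : ℕ) := by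
  obtain ⟨p, hp⟩ := p
  rw [aeval_def, eval₂_eq_sum, ← sum_fin _ (by simp) (mem_degreeLT.1 hp)]
  simp only [Algebra.smul_def]
  rfl

section MonicCoeffs

variable {R : Type*} [CommRing R] [Nontrivial R] {n : ℕ}

noncomputable def Polynomial.monicEquivCoeffs :
    {p : R[X] // p.Monic ∧ p.natDegree = n} ≃ (Fin n → R) :=
  (monicEquivDegreeLT n).trans (degreeLTEquiv R n).toEquiv

theorem Polynomial.aeval_monicEquivCoeffs_symm {A : Type*} [Semiring A] [Algebra R A]
    (c : Fin n → R) (x : A) :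
    aeval x (monicEquivCoeffs.symm c : R[X]) = x ^ n + ∑ i, c i • x ^ (i : ℕ) := by
  change aeval x (X ^ n + ((degreeLTEquiv R n).symm c : R[X])) = _
  rw [map_add, map_pow, aeval_X, aeval_eq_sum_degreeLTEquiv, LinearEquiv.apply_symm_apply]

end MonicCoeffs

theorem exists_smul_mem_sphere {K ι : Type*} [NormedField K] [Fintype ι] {v : ι → K} (hv : v ≠ 0) :
    ∃ a : K, a • v ∈ sphere 0 1 := by
  obtain ⟨i, -⟩ := Function.ne_iff.1 hv
  have : Nonempty ι := ⟨i⟩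
  obtain ⟨j, -, hj⟩ := Finset.exists_mem_eq_sup Finset.univ Finset.univ_nonempty (‖v ·‖₊)
  have hvj : ‖v‖ = ‖v j‖ := congrArg NNReal.toReal hj
  have hvj0 : v j ≠ 0 := by
    rw [← norm_ne_zero_iff, ← hvj, norm_ne_zero_iff]; exact hv
  refine ⟨(v j)⁻¹, ?_⟩
  rw [mem_sphere_zero_iff_norm, norm_smul, hvj, norm_inv, inv_mul_cancel₀ (norm_ne_zero_iff.2 hvj0)]

section Algebraic

variable (K : Type*) {A : Type*} [NormedField K] [Ring A] [Algebra K A]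

-- The coefficient vector is normalised to lie on the unit sphere, a compact set.
def rootsOfDegreeLE (n : ℕ) : Set A :=
  {x | ∃ c ∈ sphere (0 : Fin (n + 1) → K) 1, ∑ i, c i • x ^ (i : ℕ) = 0}

theorem setOf_isAlgebraic_eq_iUnion_rootsOfDegreeLE :
    {x : A | IsAlgebraic K x} = ⋃ n, rootsOfDegreeLE K n := by
  ext x
  simp only [mem_iUnion, rootsOfDegreeLE, mem_ofPred_eq]
  constructor
  · rintro ⟨p, hp0, hpx⟩
    have hp : p ∈ degreeLT K (p.natDegree + 1) := by
      rw [degreeLT_succ_eq_degreeLE, mem_degreeLE]; exact degree_le_natDegree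
    have hc0 : degreeLTEquiv K _ ⟨p, hp⟩ ≠ 0 := by
      rwa [Ne, degreeLTEquiv_eq_zero_iff_eq_zero]
    obtain ⟨a, ha⟩ := exists_smul_mem_sphere hc0
    refine ⟨p.natDegree, _, ha, ?_⟩
    simp only [Pi.smul_apply, smul_assoc, ← Finset.smul_sum]
    rw [← aeval_eq_sum_degreeLTEquiv, hpx, smul_zero]
  · rintro ⟨n, c, hc, hcx⟩
    refine ⟨(degreeLTEquiv K (n + 1)).symm c, ?_, ?_⟩
    · rw [Ne, ZeroMemClass.coe_eq_zero, LinearEquiv.map_eq_zero_iff]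
      exact ne_zero_of_mem_sphere one_ne_zero ⟨c, hc⟩
    · rw [aeval_eq_sum_degreeLTEquiv, LinearEquiv.apply_symm_apply, hcx]

theorem isClosed_rootsOfDegreeLE [ProperSpace K] [TopologicalSpace A] [IsTopologicalRing A]
    [ContinuousSMul K A] [T1Space A] (n : ℕ) : IsClosed (rootsOfDegreeLE K n : Set A) := by
  have : CompactSpace (sphere (0 : Fin (n + 1) → K) 1) :=
    isCompact_iff_compactSpace.1 (isCompact_sphere _ _)
  have hzeros : IsClosed {cx : sphere (0 : Fin (n + 1) → K) 1 × A |
      ∑ i, (cx.1 : Fin (n + 1) → K) i • cx.2 ^ (i : ℕ) = 0} :=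
    isClosed_eq (continuous_finsetSum _ fun i _ =>
      ((continuous_apply i).comp (continuous_subtype_val.comp continuous_fst)).smul
        (continuous_snd.pow _)) continuous_const
  convert isClosedMap_snd_of_compactSpace _ hzeros using 1
  ext x
  simp [rootsOfDegreeLE]

theorem isGδ_setOf_transcendental [ProperSpace K] [TopologicalSpace A] [IsTopologicalRing A]
    [ContinuousSMul K A] [T1Space A] : IsGδ {x : A | Transcendental K x} := by
  have : {x : A | Transcendental K x} = ⋂ n, (rootsOfDegreeLE K n)ᶜ := by
    rw [← compl_iUnion, ← setOf_isAlgebraic_eq_iUnion_rootsOfDegreeLE]; rfl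
  rw [this]
  exact .iInter_of_isOpen fun n => (isClosed_rootsOfDegreeLE K n).isOpen_compl

end Algebraic

theorem Polynomial.Monic.exists_isRoot_norm_sub_lt {k : Type*} [NormedField k] [IsAlgClosed k]
    {f : k[X]} (hf : f.Monic) (x : k) {m : ℝ} (hm : 0 ≤ m) (h : ‖f.eval x‖ < m ^ f.natDegree) :
    ∃ a, f.IsRoot a ∧ ‖x - a‖ < m := by
  by_contra! hfar
  refine h.not_ge ?_
  calc m ^ f.natDegree = (f.roots.map fun _ => m).prod := by
        simp [IsAlgClosed.card_roots_eq_natDegree]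
    _ ≤ (f.roots.map fun a => ‖x - a‖).prod :=
        Multiset.prod_map_le_prod_map₀ _ _ (fun _ _ => hm) fun a ha => hfar a (isRoot_of_mem_roots ha)
    _ = ‖f.eval x‖ := by
        rw [(IsAlgClosed.splits f).eval_eq_prod_roots_of_monic hf, ← normHom_apply,
          map_multiset_prod, Multiset.map_map]
        rfl

section Separable

variable {K A : Type*} [NormedField K] [NormedField A] [CharZero A] [IsAlgClosed A] [Algebra K A]
  [ContinuousSMul K A]

theorem exists_isAlgebraic_rat_dist_lt (hK : DenseRange ((↑) : ℚ → K)) {x : A}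
    (hx : IsAlgebraic K x) {ε : ℝ} (hε : 0 < ε) : ∃ w : A, IsAlgebraic ℚ w ∧ dist x w < ε := by
  set n := (minpoly K x).natDegree
  let Φ : (Fin n → K) → A := fun c => x ^ n + ∑ i, c i • x ^ (i : ℕ)
  have hΦ : Continuous Φ := by fun_prop
  have hΦf : Φ (monicEquivCoeffs ⟨minpoly K x, minpoly.monic hx.isIntegral, rfl⟩) = 0 := by
    simp only [Φ]
    rw [← aeval_monicEquivCoeffs_symm, Equiv.symm_apply_apply, minpoly.aeval]
  obtain ⟨q, hq⟩ := (DenseRange.piMap fun _ => hK).exists_mem_open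
    (isOpen_ball.preimage hΦ) ⟨_, by rw [mem_preimage, hΦf]; exact mem_ball_self (pow_pos hε n)⟩
  let g : ℚ[X] := monicEquivCoeffs.symm q
  have hg : g.Monic ∧ g.natDegree = n := (monicEquivCoeffs.symm q).2
  have hgx : ‖(g.map (algebraMap ℚ A)).eval x‖ < ε ^ n := by
    rw [eval_map_algebraMap, aeval_monicEquivCoeffs_symm]
    simpa [Φ, ratCast_smul_eq K ℚ] using hq
  obtain ⟨a, ha, hxa⟩ := (hg.1.map _).exists_isRoot_norm_sub_lt x hε.le
    (by rwa [hg.1.natDegree_map, hg.2])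
  exact ⟨a, ⟨g, hg.1.ne_zero, by rwa [← eval_map_algebraMap]⟩, by rwa [dist_eq_norm]⟩

theorem separableSpace_of_dense_isAlgebraic (hK : DenseRange ((↑) : ℚ → K))
    (h : Dense {x : A | IsAlgebraic K x}) : TopologicalSpace.SeparableSpace A :=
  ⟨⟨{w | IsAlgebraic ℚ w}, Algebraic.countable ℚ A, Dense.of_closure <| h.mono fun _ hx =>
    Metric.mem_closure_iff.2 fun _ hε => exists_isAlgebraic_rat_dist_lt hK hx hε⟩⟩

end Separable

section Polish

variable {α : Type*} [TopologicalSpace α] [PolishSpace α]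

theorem polishSpace_iInter_of_isOpen {ι : Type*} [Countable ι] {U : ι → Set α}
    (hU : ∀ i, IsOpen (U i)) : PolishSpace (⋂ i, U i) := by
  have := fun i => (hU i).polishSpace
  let f : (⋂ i, U i) → α × ∀ i, U i := fun x => (x, fun i => ⟨x, mem_iInter.1 x.2 i⟩)
  have hrange : range f = ⋂ i, {z | (z.2 i : α) = z.1} := by
    ext ⟨a, y⟩
    simp only [mem_iInter, mem_ofPred_eq]
    constructor
    · rintro ⟨x, hx⟩ i
      simp only [f, Prod.ext_iff] at hx
      obtain ⟨rfl, rfl⟩ := hx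
      rfl
    · intro h
      refine ⟨⟨a, mem_iInter.2 fun i => h i ▸ (y i).2⟩, ?_⟩
      ext i <;> simp [f, h]
  refine IsClosedEmbedding.polishSpace (f := f) ⟨?_, ?_⟩
  · exact (IsInducing.of_comp (by fun_prop) continuous_fst IsInducing.subtypeVal).isEmbedding
  · rw [hrange]
    exact isClosed_iInter fun i => isClosed_eq (by fun_prop) continuous_fst

theorem IsGδ.polishSpace {s : Set α} (hs : IsGδ s) : PolishSpace s := by
  obtain ⟨T, hTo, hTc, rfl⟩ := hs
  have := hTc.to_subtype
  rw [sInter_eq_iInter]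
  exact polishSpace_iInter_of_isOpen fun t => hTo t t.2

end Polish

theorem transcendent_upper_half_plane_polish_general
    (p : ℕ) [Fact p.Prime]
    (Qbar : Type) [Field Qbar] [Algebra ℚ_[p] Qbar] [IsAlgClosure ℚ_[p] Qbar]
    (Cp : Type) [NormedField Cp] [CompleteSpace Cp] [IsAlgClosed Cp]
    [Algebra ℚ_[p] Cp] [Algebra Qbar Cp] [IsScalarTower ℚ_[p] Qbar Cp]
    (hQp : Isometry (algebraMap ℚ_[p] Cp))
    (hdense : DenseRange (algebraMap Qbar Cp)) :
    PolishSpace {x : Cp // Transcendental ℚ_[p] x} := by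
  have : ContinuousSMul ℚ_[p] Cp := continuousSMul_of_algebraMap _ _ hQp.continuous
  have : CharZero Cp := charZero_of_injective_algebraMap (algebraMap ℚ_[p] Cp).injective
  have hQpbar : Dense {x : Cp | IsAlgebraic ℚ_[p] x} := hdense.mono <| range_subset_iff.2 fun y =>
    (IsAlgClosure.isAlgebraic.isAlgebraic y).algHom (IsScalarTower.toAlgHom ℚ_[p] Qbar Cp)
  have := separableSpace_of_dense_isAlgebraic (Padic.denseRange_ratCast p) hQpbar
  exact (isGδ_setOf_transcendental ℚ_[p]).polishSpace

theorem transcendent_upper_half_plane_polish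
    (p : ℕ) [Fact p.Prime]
    (Qbar : Type) [Field Qbar] [Algebra ℚ_[p] Qbar] [IsAlgClosure ℚ_[p] Qbar]
    (Cp : Type) [NormedField Cp] [CompleteSpace Cp] [IsUltrametricDist Cp] [IsAlgClosed Cp]
    [Algebra ℚ_[p] Cp] [Algebra Qbar Cp] [IsScalarTower ℚ_[p] Qbar Cp]
    (hQp : Isometry (algebraMap ℚ_[p] Cp))
    (hdense : DenseRange (algebraMap Qbar Cp)) :
    PolishSpace {x : Cp // Transcendental ℚ_[p] x} :=
  transcendent_upper_half_plane_polish_general p Qbar Cp hQp hdense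
end

section
/- For every element t ∈ ℂ_p, its orbit under the absolute Galois group, namely the set 𝒞(t) = {σ̂(t) : σ ∈ Gal(ℚ̄_p/ℚ_p)} ⊆ ℂ_p, where σ̂ denotes the continuous isometric extension of σ to ℂ_p, is a compact subset of ℂ_p. -/
/-!
Let `K` be the set of automorphisms `σ` of `ℚ̄_p` preserving the norm pulled back from `ℂ_p`.
It is closed in the profinite Galois group, hence compact, and each `σ ∈ K` extends by
continuity to a unique isometric automorphism `σ̂` of `ℂ_p`; the orbit is the image of `K`
under `σ ↦ σ̂ t`. This map is continuous: if `t` is `ε`-close to `a ∈ ℚ̄_p`, then `σ̂ t` is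
`ε`-close to `σ a`, which is locally constant in `σ`.
-/
section Extension

variable {L X : Type*} [Ring L] [NormedRing X] [CompleteSpace X] {e : L →+* X}

theorem exists_isometry_ringHom_extension (he : DenseRange e) (ρ : L →+* L)
    (hρ : ∀ a, ‖e (ρ a)‖ = ‖e a‖) :
    ∃ ψ : X →+* X, Isometry ψ ∧ ∀ a, ψ (e a) = e (ρ a) := by
  let _ : PseudoMetricSpace L := .induced e inferInstance
  have hui : IsUniformInducing e :=
    (Isometry.of_dist_eq (f := e) fun _ _ => rfl).isUniformInducing
  have hρe : Isometry (e.comp ρ) := .of_dist_eq fun a b => by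
    change dist (e (ρ a)) (e (ρ b)) = dist (e a) (e b)
    simp only [dist_eq_norm, ← map_sub, hρ]
  set ψ := IsDenseInducing.extendRingHom hui he hρe.uniformContinuous
  have hψe : ∀ a, ψ (e a) = e (ρ a) :=
    (hui.isDenseInducing he).extend_eq hρe.uniformContinuous.continuous
  have hψ : Continuous ψ :=
    (uniformContinuous_uniformly_extend hui he hρe.uniformContinuous).continuous
  refine ⟨ψ, (AddMonoidHomClass.isometry_iff_norm ψ).2 fun x => ?_, hψe⟩
  have hnorm : (fun x => ‖ψ x‖) = (fun x => ‖x‖) :=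
    Continuous.ext_on he hψ.norm continuous_norm fun _ ⟨a, ha⟩ => by
      simp only [← ha, hψe, hρ]
  exact congrFun hnorm x

theorem exists_isometry_ringEquiv_extension (he : DenseRange e) (σ : L ≃+* L)
    (hσ : ∀ a, ‖e (σ a)‖ = ‖e a‖) :
    ∃ τ : X ≃+* X, Isometry τ ∧ ∀ a, τ (e a) = e (σ a) := by
  obtain ⟨ψ, hψ, hψe⟩ := exists_isometry_ringHom_extension he σ.toRingHom hσ
  have hdense : DenseRange ψ := he.mono <| by
    rintro _ ⟨a, rfl⟩
    exact ⟨e (σ.symm a), by simp [hψe]⟩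
  have hsurj : Function.Surjective ψ := by
    rw [← Set.range_eq_univ, ← hdense.closure_eq, hψ.isClosedEmbedding.isClosed_range.closure_eq]
  exact ⟨.ofBijective ψ ⟨hψ.injective, hsurj⟩, hψ, hψe⟩

end Extension

section Galois

variable {F L : Type*} [Field F] [Field L] [Algebra F L]

theorem isLocallyConstant_algEquiv_apply [Algebra.IsIntegral F L] (x : L) :
    IsLocallyConstant fun σ : Gal(L/F) => σ x := by
  refine IsLocallyConstant.iff_isOpen_fiber_apply.2 fun σ => ?_
  have hfiber : (fun ρ : Gal(L/F) => ρ x) ⁻¹' {σ x} =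
      (σ⁻¹ * ·) ⁻¹' (MulAction.stabilizer Gal(L/F) x : Set Gal(L/F)) := by
    ext ρ
    simp [AlgEquiv.aut_inv, AlgEquiv.eq_symm_apply, eq_comm]
  rw [hfiber]
  exact (stabilizer_isOpen_of_isIntegral x).preimage (continuous_const_mul _)

variable {X : Type*} [NormedRing X]

theorem isCompact_setOf_forall_norm_apply_eq [IsGalois F L] (e : L →+* X) :
    IsCompact {σ : Gal(L/F) | ∀ a, ‖e (σ a)‖ = ‖e a‖} := by
  rw [Set.ofPred_forall]
  exact (isClosed_iInter fun a =>
    ((isLocallyConstant_algEquiv_apply a).comp fun b => ‖e b‖).isClosed_fiber _).isCompact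

theorem continuousOn_extension_apply [Algebra.IsIntegral F L] {e : L →+* X} (he : DenseRange e)
    {S : Set Gal(L/F)} {Φ : Gal(L/F) → X → X} (hΦ : ∀ σ ∈ S, Isometry (Φ σ))
    (hΦe : ∀ σ ∈ S, ∀ a, Φ σ (e a) = e (σ a)) (t : X) :
    ContinuousOn (fun σ => Φ σ t) S := by
  intro σ hσ
  refine Metric.tendsto_nhds.2 fun ε hε => ?_
  obtain ⟨a, ha⟩ := he.exists_dist_lt t (half_pos hε)
  filter_upwards [self_mem_nhdsWithin,
    nhdsWithin_le_nhds ((isLocallyConstant_algEquiv_apply a).eventually_eq σ)] with ρ hρ hρa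
  have hmid : Φ ρ (e a) = Φ σ (e a) := by rw [hΦe ρ hρ, hΦe σ hσ, hρa]
  calc dist (Φ ρ t) (Φ σ t)
      ≤ dist (Φ ρ t) (Φ ρ (e a)) + dist (Φ σ (e a)) (Φ σ t) := by
        simpa only [hmid] using dist_triangle _ (Φ ρ (e a)) _
    _ = dist t (e a) + dist (e a) t := by rw [(hΦ ρ hρ).dist_eq, (hΦ σ hσ).dist_eq]
    _ < ε / 2 + ε / 2 := by rw [dist_comm (e a)]; exact add_lt_add ha ha
    _ = ε := add_halves ε

end Galois

theorem isCompact_galois_orbit {F L X : Type*} [Field F] [Field L] [Algebra F L] [IsGalois F L]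
    [NormedRing X] [CompleteSpace X] {e : L →+* X} (he : DenseRange e) (t : X) :
    IsCompact {y : X | ∃ σ : Gal(L/F), ∃ τ : X ≃+* X, Isometry τ ∧
      (∀ a, τ (e a) = e (σ a)) ∧ τ t = y} := by
  set K := {σ : Gal(L/F) | ∀ a, ‖e (σ a)‖ = ‖e a‖}
  choose! Φ hΦ hΦe using fun σ (hσ : σ ∈ K) =>
    exists_isometry_ringEquiv_extension he σ.toRingEquiv hσ
  have horbit : {y : X | ∃ σ : Gal(L/F), ∃ τ : X ≃+* X, Isometry τ ∧
      (∀ a, τ (e a) = e (σ a)) ∧ τ t = y} = (fun σ => Φ σ t) '' K := by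
    ext y
    constructor
    · rintro ⟨σ, τ, hτ, hτe, rfl⟩
      have hσ : σ ∈ K := fun a => by rw [← hτe, (AddMonoidHomClass.isometry_iff_norm τ).1 hτ]
      have hτΦ : ⇑(Φ σ) = τ := Continuous.ext_on he (hΦ σ hσ).continuous hτ.continuous <| by
        rintro _ ⟨a, rfl⟩
        exact (hΦe σ hσ a).trans (hτe a).symm
      exact ⟨σ, hσ, congrFun hτΦ t⟩
    · rintro ⟨σ, hσ, rfl⟩
      exact ⟨σ, Φ σ, hΦ σ hσ, hΦe σ hσ, rfl⟩
  rw [horbit]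
  exact (isCompact_setOf_forall_norm_apply_eq e).image_of_continuousOn
    (continuousOn_extension_apply he hΦ hΦe t)

theorem galois_orbit_isCompact_general
    (p : ℕ) [Fact p.Prime]
    (Qbar : Type) [Field Qbar] [Algebra ℚ_[p] Qbar] [IsAlgClosure ℚ_[p] Qbar]
    (Cp : Type) [NormedField Cp] [CompleteSpace Cp] [Algebra Qbar Cp]
    (hdense : DenseRange (algebraMap Qbar Cp))
    (t : Cp) :
    IsCompact {y : Cp | ∃ σ : Qbar ≃ₐ[ℚ_[p]] Qbar, ∃ τ : Cp ≃+* Cp, Isometry τ ∧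
      (∀ a : Qbar, τ (algebraMap Qbar Cp a) = algebraMap Qbar Cp (σ a)) ∧ τ t = y} :=
  isCompact_galois_orbit hdense t

theorem galois_orbit_isCompact
    (p : ℕ) [Fact p.Prime]
    (Qbar : Type) [Field Qbar] [Algebra ℚ_[p] Qbar] [IsAlgClosure ℚ_[p] Qbar]
    (Cp : Type) [NormedField Cp] [CompleteSpace Cp] [IsUltrametricDist Cp] [IsAlgClosed Cp]
    [Algebra ℚ_[p] Cp] [Algebra Qbar Cp] [IsScalarTower ℚ_[p] Qbar Cp]
    (hQp : Isometry (algebraMap ℚ_[p] Cp))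
    (hdense : DenseRange (algebraMap Qbar Cp))
    (t : Cp) :
    IsCompact {y : Cp | ∃ σ : Qbar ≃ₐ[ℚ_[p]] Qbar, ∃ τ : Cp ≃+* Cp, Isometry τ ∧
      (∀ a : Qbar, τ (algebraMap Qbar Cp a) = algebraMap Qbar Cp (σ a)) ∧ τ t = y} :=
  galois_orbit_isCompact_general p Qbar Cp hdense t
end

section
/- For every fixed t ∈ ℂ_p, the evaluation map Gal(ℚ̄_p/ℚ_p) → ℂ_p, σ ↦ σ̂(t), is continuous, where Gal(ℚ̄_p/ℚ_p) carries the Krull topology and σ̂ denotes the continuous isometric extension of σ to ℂ_p. That is, the absolute Galois group acts continuously on ℂ_p. -/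
open scoped Pointwise


/-!
STATEMENT 5. For every fixed `t ∈ ℂ_p`, the evaluation map
`Gal(ℚ̄_p/ℚ_p) → ℂ_p, σ ↦ σ̂(t)` is continuous, where the Galois group carries the Krull
topology and `σ̂` is the unique continuous isometric extension of `σ` to `ℂ_p`; i.e. the
absolute Galois group acts continuously on `ℂ_p`.

`ℂ_p` is characterised by its defining properties: `Cp` is a complete, algebraically
closed, ultrametric normed field with an isometric embedding of `ℚ_p` and a dense copy
of an algebraic closure `Qbar` of `ℚ_p`.  We quantify over any assignment
`E : Gal(ℚ̄_p/ℚ_p) → (ring automorphisms of Cp)` such that each `E σ` is an isometric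
extension of `σ` (by uniqueness of such extensions, `E σ = σ̂`).  The Krull topology
on `Qbar ≃ₐ[ℚ_[p]] Qbar` is Mathlib's `krullTopology` instance.
-/
theorem galois_action_on_Cp_continuous
    (p : ℕ) [Fact p.Prime]
    (Qbar : Type) [Field Qbar] [Algebra ℚ_[p] Qbar] [IsAlgClosure ℚ_[p] Qbar]
    (Cp : Type) [NormedField Cp] [CompleteSpace Cp] [IsUltrametricDist Cp] [IsAlgClosed Cp]
    [Algebra ℚ_[p] Cp] [Algebra Qbar Cp] [IsScalarTower ℚ_[p] Qbar Cp]
    (hQp : Isometry (algebraMap ℚ_[p] Cp))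
    (hdense : DenseRange (algebraMap Qbar Cp))
    (E : (Qbar ≃ₐ[ℚ_[p]] Qbar) → (Cp ≃+* Cp))
    (hE : ∀ σ : Qbar ≃ₐ[ℚ_[p]] Qbar, Isometry (E σ) ∧
      ∀ a : Qbar, E σ (algebraMap Qbar Cp a) = algebraMap Qbar Cp (σ a))
    (t : Cp) :
    Continuous fun σ : Qbar ≃ₐ[ℚ_[p]] Qbar => E σ t := by
  rw [continuous_iff_continuousAt]
  intro σ₀
  rw [ContinuousAt, Metric.tendsto_nhds]
  intro ε hε
  obtain ⟨a, ha⟩ := Metric.denseRange_iff.mp hdense t (ε / 2) (by positivity)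
  haveI : Algebra.IsAlgebraic ℚ_[p] Qbar := IsAlgClosure.isAlgebraic
  have hint : IsIntegral ℚ_[p] a := (Algebra.IsAlgebraic.isAlgebraic a).isIntegral
  haveI : FiniteDimensional ℚ_[p] (IntermediateField.adjoin ℚ_[p] {a}) :=
    IntermediateField.adjoin.finiteDimensional hint
  have hopen : IsOpen (σ₀ • ((IntermediateField.adjoin ℚ_[p] {a}).fixingSubgroup :
      Set (Qbar ≃ₐ[ℚ_[p]] Qbar))) :=
    (IntermediateField.fixingSubgroup_isOpen _).leftCoset σ₀
  have hmem : σ₀ ∈ σ₀ • ((IntermediateField.adjoin ℚ_[p] {a}).fixingSubgroup :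
      Set (Qbar ≃ₐ[ℚ_[p]] Qbar)) :=
    ⟨1, Subgroup.one_mem _, mul_one σ₀⟩
  filter_upwards [hopen.mem_nhds hmem] with σ hσ
  obtain ⟨τ, hτ, rfl⟩ := hσ
  have hτa : τ a = a := hτ ⟨a, IntermediateField.mem_adjoin_simple_self ℚ_[p] a⟩
  have key : E (σ₀ * τ) (algebraMap Qbar Cp a) = E σ₀ (algebraMap Qbar Cp a) := by
    rw [(hE (σ₀ * τ)).2, (hE σ₀).2]
    simp [AlgEquiv.mul_apply, hτa]
  calc dist (E (σ₀ * τ) t) (E σ₀ t)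
      ≤ dist (E (σ₀ * τ) t) (E (σ₀ * τ) (algebraMap Qbar Cp a))
        + dist (E σ₀ (algebraMap Qbar Cp a)) (E σ₀ t) := by
        rw [key] at *; exact dist_triangle _ _ _
    _ = dist t (algebraMap Qbar Cp a) + dist (algebraMap Qbar Cp a) t := by
        rw [(hE (σ₀ * τ)).1.dist_eq, (hE σ₀).1.dist_eq]
    _ < ε / 2 + ε / 2 := by rw [dist_comm (algebraMap Qbar Cp a) t]; exact add_lt_add ha ha
    _ = ε := by ring
end

section
/- Let f be given by a power series f(x) = ∑_{n≥0} a_n x^n with coefficients a_n ∈ ℂ_p, and let r > 0 be a real number such that ‖a_n‖·r^n → 0 as n → ∞ (so the series converges for all x ∈ ℂ_p with ‖x‖ ≤ r). If f(x) ≠ 0 for every x ∈ ℂ_p with ‖x‖ ≤ r, then the absolute value of f is constant on the closed disc: ‖f(x)‖ = ‖a_0‖ for all x ∈ ℂ_p with ‖x‖ ≤ r. -/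
/-!
If `‖a N‖ * r ^ N ≥ ‖a 0‖` for some `N ≥ 1`, the series has a zero in the closed disc. Indeed,
the number of roots in the disc of a polynomial `P` over an algebraically closed ultrametric field
is its Weierstrass degree (the largest index maximising `‖P.coeff n‖ * r ^ n`), because this degree
is additive and equals `1` or `0` for a linear factor `X - w` according as `‖w‖ ≤ r` or not. For the
truncations of the series this degree `s` is at least `1` and bounded independently of the
truncation, and comparing the factorisations of `P(y)` and `P(0)` gives a root `w` in the disc with
`‖a 0‖ * ‖y - w‖ ^ s ≤ ‖P(y)‖ * r ^ s`. Jumping from root to root of finer and finer truncations is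
a Newton-type iteration converging to a zero of the series. Otherwise `‖a n‖ * r ^ n < ‖a 0‖` for
all `n ≥ 1`, and the constant term dominates the series at every point of the disc.
-/

open Polynomial Filter Topology

section Ultrametric

variable {E ι : Type*} [SeminormedAddCommGroup E] [IsUltrametricDist E]

theorem IsUltrametricDist.norm_sub_le_max (x y : E) : ‖x - y‖ ≤ max ‖x‖ ‖y‖ := by
  rw [sub_eq_add_neg, ← norm_neg y]
  exact norm_add_le_max x (-y)

theorem IsUltrametricDist.norm_sum_eq_of_forall_ne_lt [DecidableEq ι] {s : Finset ι} {f : ι → E}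
    {i : ι} (hi : i ∈ s) (h : ∀ j ∈ s, j ≠ i → ‖f j‖ < ‖f i‖) : ‖∑ j ∈ s, f j‖ = ‖f i‖ := by
  rw [← Finset.add_sum_erase s f hi]
  rcases (s.erase i).eq_empty_or_nonempty with hs | hs
  · rw [hs, Finset.sum_empty, add_zero]
  obtain ⟨j, hj, hle⟩ := exists_norm_finsetSum_le_of_nonempty hs f
  have hlt : ‖∑ k ∈ s.erase i, f k‖ < ‖f i‖ :=
    hle.trans_lt (h j (Finset.mem_of_mem_erase hj) (Finset.ne_of_mem_erase hj))
  rw [norm_add_eq_max_of_norm_ne_norm hlt.ne', max_eq_left hlt.le]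

end Ultrametric

namespace Polynomial

section DominantIndex

variable {K : Type*} [NormedField K] {r : ℝ} {P Q : K[X]} {i j : ℕ}

-- `i` is the Weierstrass degree of `P` on the closed disc of radius `r`.
def IsDominantIndex (r : ℝ) (P : K[X]) (i : ℕ) : Prop :=
  (∀ n, ‖P.coeff n‖ * r ^ n ≤ ‖P.coeff i‖ * r ^ i) ∧
    ∀ n, i < n → ‖P.coeff n‖ * r ^ n < ‖P.coeff i‖ * r ^ i

theorem IsDominantIndex.pos (hr : 0 ≤ r) (hP : IsDominantIndex r P i) :
    0 < ‖P.coeff i‖ * r ^ i :=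
  lt_of_le_of_lt (by positivity) (hP.2 (i + 1) i.lt_succ_self)

theorem IsDominantIndex.mul_lt_of_lt_or_lt (hr : 0 ≤ r) (hP : IsDominantIndex r P i)
    (hQ : IsDominantIndex r Q j) {k l : ℕ} (hkl : i < k ∨ j < l) :
    (‖P.coeff k‖ * r ^ k) * (‖Q.coeff l‖ * r ^ l) <
      (‖P.coeff i‖ * r ^ i) * (‖Q.coeff j‖ * r ^ j) := by
  rcases hkl with hk | hl
  · exact mul_lt_mul_of_lt_of_le_of_nonneg_of_pos (hP.2 k hk) (hQ.1 l) (by positivity)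
      (hQ.pos hr)
  · exact mul_lt_mul_of_le_of_lt_of_nonneg_of_pos (hP.1 k) (hQ.2 l hl) (by positivity)
      (hP.pos hr)

open Finset.HasAntidiagonal in
theorem IsDominantIndex.mul [IsUltrametricDist K] (hr : 0 < r) (hP : IsDominantIndex r P i)
    (hQ : IsDominantIndex r Q j) : IsDominantIndex r (P * Q) (i + j) := by
  have hterm (k l : ℕ) : ‖P.coeff k * Q.coeff l‖ * r ^ (k + l) =
      (‖P.coeff k‖ * r ^ k) * (‖Q.coeff l‖ * r ^ l) := by
    rw [norm_mul, pow_add]; ring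
  have hcoeff (m : ℕ) : ∃ k l, k + l = m ∧
      ‖(P * Q).coeff m‖ * r ^ m ≤ (‖P.coeff k‖ * r ^ k) * (‖Q.coeff l‖ * r ^ l) := by
    obtain ⟨⟨k, l⟩, hkl, hle⟩ := IsUltrametricDist.exists_norm_finsetSum_le_of_nonempty
      (t := antidiagonal m) ⟨(m, 0), by simp⟩ (fun q => P.coeff q.1 * Q.coeff q.2)
    rw [mem_antidiagonal] at hkl
    refine ⟨k, l, hkl, ?_⟩
    rw [← hterm, hkl, coeff_mul]
    gcongr
  have hmax : ‖(P * Q).coeff (i + j)‖ * r ^ (i + j) =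
      (‖P.coeff i‖ * r ^ i) * (‖Q.coeff j‖ * r ^ j) := by
    rw [← hterm, coeff_mul,
      IsUltrametricDist.norm_sum_eq_of_forall_ne_lt (i := (i, j)) (mem_antidiagonal.2 rfl)]
    rintro ⟨k, l⟩ hkl hne
    rw [mem_antidiagonal] at hkl
    have hlt := hP.mul_lt_of_lt_or_lt hr.le hQ (k := k) (l := l) (by grind)
    rw [← hterm, ← hterm, hkl] at hlt
    exact lt_of_mul_lt_mul_right hlt (by positivity)
  refine ⟨fun n => ?_, fun n hn => ?_⟩
  · obtain ⟨k, l, -, hle⟩ := hcoeff n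
    rw [hmax]
    exact hle.trans (mul_le_mul (hP.1 k) (hQ.1 l) (by positivity) (hP.pos hr.le).le)
  · obtain ⟨k, l, hkl, hle⟩ := hcoeff n
    rw [hmax]
    exact hle.trans_lt (hP.mul_lt_of_lt_or_lt hr.le hQ (by omega))

theorem isDominantIndex_C {c : K} (hc : c ≠ 0) : IsDominantIndex r (C c) 0 := by
  refine ⟨fun n => ?_, fun n hn => ?_⟩
  · cases n <;> simp [coeff_C]
  · simpa [coeff_C, hn.ne'] using hc

theorem isDominantIndex_X_sub_C_of_norm_le (hr : 0 < r) {w : K} (hw : ‖w‖ ≤ r) :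
    IsDominantIndex r (X - C w) 1 := by
  refine ⟨fun n => ?_, fun n hn => ?_⟩
  · match n with
    | 0 => simpa [coeff_C] using hw
    | 1 => simp
    | n + 2 => simp [coeff_X]; positivity
  · obtain ⟨n, rfl⟩ : ∃ m, n = m + 2 := ⟨n - 2, by omega⟩
    simp [coeff_X]; positivity

theorem isDominantIndex_X_sub_C_of_lt_norm (hr : 0 ≤ r) {w : K} (hw : r < ‖w‖) :
    IsDominantIndex r (X - C w) 0 := by
  refine ⟨fun n => ?_, fun n hn => ?_⟩
  · match n with
    | 0 => simp
    | 1 => simpa using hw.le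
    | n + 2 => simp [coeff_X]
  · match n, hn with
    | 1, _ => simpa using hw
    | n + 2, _ => simpa [coeff_X, coeff_C] using hr.trans_lt hw

theorem isDominantIndex_multiset_prod_X_sub_C [IsUltrametricDist K] (hr : 0 < r)
    (R : Multiset K) :
    IsDominantIndex r (R.map fun w => X - C w).prod (R.filter fun w => ‖w‖ ≤ r).card := by
  induction R using Multiset.induction_on with
  | empty => simpa using isDominantIndex_C (r := r) (one_ne_zero (α := K))
  | cons w R ih =>
    rw [Multiset.map_cons, Multiset.prod_cons]
    by_cases hw : ‖w‖ ≤ r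
    · rw [Multiset.filter_cons_of_pos (p := fun w => ‖w‖ ≤ r) _ hw, Multiset.card_cons,
        add_comm]
      exact (isDominantIndex_X_sub_C_of_norm_le hr hw).mul hr ih
    · rw [Multiset.filter_cons_of_neg (p := fun w => ‖w‖ ≤ r) _ hw,
        ← zero_add (Multiset.card _)]
      exact (isDominantIndex_X_sub_C_of_lt_norm hr.le (not_le.1 hw)).mul hr ih

theorem norm_eval_eq_norm_leadingCoeff_mul_prod [IsAlgClosed K] (x : K) :
    ‖P.eval x‖ = ‖P.leadingCoeff‖ * (P.roots.map fun w => ‖x - w‖).prod := by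
  conv_lhs =>
    rw [← C_leadingCoeff_mul_prod_multiset_X_sub_C (p := P) IsAlgClosed.card_roots_eq_natDegree]
  rw [eval_mul, eval_C, eval_multiset_prod, norm_mul, Multiset.map_map]
  exact congrArg _ ((map_multiset_prod (normHom : K →*₀ ℝ) _).trans (by simp [Multiset.map_map]))

variable [IsUltrametricDist K] [IsAlgClosed K]

theorem isDominantIndex_card_filter_roots (hr : 0 < r) (hP : P ≠ 0) :
    IsDominantIndex r P (P.roots.filter fun w => ‖w‖ ≤ r).card := by
  have := (isDominantIndex_C (leadingCoeff_ne_zero.2 hP)).mul hr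
    (isDominantIndex_multiset_prod_X_sub_C hr P.roots)
  rwa [zero_add, C_leadingCoeff_mul_prod_multiset_X_sub_C (p := P)
    IsAlgClosed.card_roots_eq_natDegree] at this

theorem norm_coeff_zero_mul_prod_le {x : K} (hx : ‖x‖ ≤ r) :
    ‖P.coeff 0‖ * ((P.roots.filter fun w => ‖w‖ ≤ r).map fun w => ‖x - w‖).prod ≤
      ‖P.eval x‖ * r ^ (P.roots.filter fun w => ‖w‖ ≤ r).card := by
  set Rin := P.roots.filter fun w => ‖w‖ ≤ r
  set Rout := P.roots.filter fun w => ¬‖w‖ ≤ r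
  have hsplit (f : K → ℝ) : (P.roots.map f).prod = (Rin.map f).prod * (Rout.map f).prod := by
    rw [← Multiset.prod_add, ← Multiset.map_add, Multiset.filter_add_not]
  have hout : (Rout.map fun w => ‖x - w‖).prod = (Rout.map fun w => ‖0 - w‖).prod := by
    refine congrArg _ (Multiset.map_congr rfl fun w hw => ?_)
    have hxw : ‖x‖ < ‖-w‖ := norm_neg w ▸ hx.trans_lt (not_le.1 (Multiset.mem_filter.1 hw).2)
    rw [sub_eq_add_neg, IsUltrametricDist.norm_add_eq_max_of_norm_ne_norm hxw.ne, zero_sub,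
      max_eq_right hxw.le]
  have hin : (Rin.map fun w => ‖0 - w‖).prod ≤ r ^ Rin.card := by
    calc (Rin.map fun w => ‖0 - w‖).prod ≤ (Rin.map fun _ => r).prod :=
          Multiset.prod_map_le_prod_map₀ _ _ (fun _ _ => norm_nonneg _)
            fun w hw => by simpa using (Multiset.mem_filter.1 hw).2
      _ = r ^ Rin.card := by simp
  have hnonneg (S : Multiset K) (y : K) : 0 ≤ (S.map fun w => ‖y - w‖).prod :=
    Multiset.prod_map_nonneg fun _ _ => norm_nonneg _
  rw [coeff_zero_eq_eval_zero, norm_eval_eq_norm_leadingCoeff_mul_prod,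
    norm_eval_eq_norm_leadingCoeff_mul_prod, hsplit, hsplit, hout]
  have := mul_nonneg (mul_nonneg (norm_nonneg P.leadingCoeff) (hnonneg Rout 0)) (hnonneg Rin x)
  nlinarith

theorem exists_isRoot_near (hr : 0 < r) (hP0 : P.coeff 0 ≠ 0) {N : ℕ} (hN : N ≠ 0)
    (hPN : ‖P.coeff 0‖ ≤ ‖P.coeff N‖ * r ^ N) {x : K} (hx : ‖x‖ ≤ r) :
    ∃ s ≠ 0, IsDominantIndex r P s ∧
      ∃ w, P.IsRoot w ∧ ‖w‖ ≤ r ∧ ‖P.coeff 0‖ * ‖x - w‖ ^ s ≤ ‖P.eval x‖ * r ^ s := by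
  classical
  have hP : P ≠ 0 := by rintro rfl; exact hP0 (coeff_zero 0)
  set Rin := P.roots.filter fun w => ‖w‖ ≤ r
  have hdom : IsDominantIndex r P Rin.card := isDominantIndex_card_filter_roots hr hP
  have hs : Rin.card ≠ 0 := by
    intro h0
    rw [h0] at hdom
    have := hdom.2 N (Nat.pos_of_ne_zero hN)
    rw [pow_zero, mul_one] at this
    exact this.not_ge hPN
  obtain ⟨w, hw, hmin⟩ := Rin.toFinset.exists_min_image (fun w => ‖x - w‖)
    (Multiset.toFinset_nonempty.2 fun h => hs (Multiset.card_eq_zero.2 h))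
  rw [Multiset.mem_toFinset] at hw
  refine ⟨_, hs, hdom, w, isRoot_of_mem_roots (Multiset.mem_of_mem_filter hw),
    (Multiset.mem_filter.1 hw).2, ?_⟩
  calc ‖P.coeff 0‖ * ‖x - w‖ ^ Rin.card = ‖P.coeff 0‖ * (Rin.map fun _ => ‖x - w‖).prod := by
        simp
    _ ≤ ‖P.coeff 0‖ * (Rin.map fun u => ‖x - u‖).prod := by
        gcongr
        exact Multiset.prod_map_le_prod_map₀ _ _ (fun _ _ => norm_nonneg _)
          fun u hu => hmin u (Multiset.mem_toFinset.2 hu)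
    _ ≤ ‖P.eval x‖ * r ^ Rin.card := norm_coeff_zero_mul_prod_le hx

end DominantIndex

end Polynomial

section Iteration

variable {X E : Type*} [PseudoMetricSpace X] [CompleteSpace X] [NormedAddCommGroup E]

theorem exists_mem_eq_zero_of_forall_exists_near {S : Set X} (hS : IsClosed S) {g : X → E}
    (hg : ContinuousOn g S) {M : ℕ} (hM : M ≠ 0) {C : ℝ} {y₀ : X} (hy₀ : y₀ ∈ S)
    (hstep : ∀ y ∈ S, ∀ η > 0, ∃ w ∈ S, ‖g w‖ ≤ η ∧ dist w y ^ M ≤ C * ‖g y‖) :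
    ∃ z ∈ S, g z = 0 := by
  choose! next hnextS hnextg hnextd using hstep
  set q : ℝ := (1 / 2) ^ M
  let u : ℕ → X := fun k => Nat.rec (next y₀ 1) (fun k y => next y (q ^ (k + 1))) k
  have hu (k : ℕ) : u k ∈ S ∧ ‖g (u k)‖ ≤ q ^ k := by
    induction k with
    | zero => exact ⟨hnextS _ hy₀ 1 one_pos, (hnextg _ hy₀ 1 one_pos).trans_eq (pow_zero q).symm⟩
    | succ k ih => exact ⟨hnextS _ ih.1 _ (by positivity), hnextg _ ih.1 _ (by positivity)⟩
  set c := max C 1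
  have hdist (k : ℕ) : dist (u k) (u (k + 1)) ≤ c * (1 / 2) ^ k := by
    rw [dist_comm, ← pow_le_pow_iff_left₀ dist_nonneg (by positivity) hM]
    calc dist (u (k + 1)) (u k) ^ M ≤ C * ‖g (u k)‖ :=
          hnextd (u k) (hu k).1 (q ^ (k + 1)) (by positivity)
      _ ≤ c * q ^ k := mul_le_mul (le_max_left _ _) (hu k).2 (norm_nonneg _) (by positivity)
      _ ≤ c ^ M * q ^ k := by gcongr; exact le_self_pow₀ (le_max_right _ _) hM
      _ = (c * (1 / 2) ^ k) ^ M := by rw [mul_pow, ← pow_mul, ← pow_mul, mul_comm k]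
  obtain ⟨z, hz⟩ := cauchySeq_tendsto_of_complete
    (cauchySeq_of_le_geometric (1 / 2) c (by norm_num) hdist)
  have hzS : z ∈ S := hS.mem_of_tendsto hz (Eventually.of_forall fun k => (hu k).1)
  have hlim : Tendsto (fun k => g (u k)) atTop (𝓝 (g z)) :=
    (hg z hzS).tendsto.comp (tendsto_nhdsWithin_iff.2 ⟨hz, Eventually.of_forall fun k => (hu k).1⟩)
  have hlim0 : Tendsto (fun k => g (u k)) atTop (𝓝 0) :=
    squeeze_zero_norm (fun k => (hu k).2)
      (tendsto_pow_atTop_nhds_zero_of_lt_one (by positivity) (pow_lt_one₀ (by norm_num) (by norm_num) hM))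
  exact ⟨z, hzS, tendsto_nhds_unique hlim hlim0⟩

end Iteration


theorem PowerSeries.eval_trunc_mk {R : Type*} [CommSemiring R] (a : ℕ → R) (D : ℕ) (x : R) :
    (trunc D (mk a)).eval x = ∑ n ∈ Finset.range D, a n * x ^ n := by
  simpa using eval₂_trunc_eq_sum_range x (RingHom.id R) D (mk a)

theorem tsum_mul_zero_pow {R : Type*} [Semiring R] [TopologicalSpace R] (a : ℕ → R) :
    ∑' n, a n * 0 ^ n = a 0 := by
  rw [tsum_eq_single 0 fun n hn => by rw [zero_pow hn, mul_zero], pow_zero, mul_one]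

section PowerSeriesOnDisc

variable {K : Type*} [NormedField K] {a : ℕ → K} {r : ℝ}

theorem norm_mul_pow_le_of_norm_le {x : K} (hx : ‖x‖ ≤ r) (n : ℕ) :
    ‖a n * x ^ n‖ ≤ ‖a n‖ * r ^ n := by
  rw [norm_mul, norm_pow]
  gcongr

variable [IsUltrametricDist K] [CompleteSpace K]

theorem summable_mul_pow_of_tendsto (hconv : Tendsto (fun n => ‖a n‖ * r ^ n) atTop (𝓝 0))
    {x : K} (hx : ‖x‖ ≤ r) : Summable fun n => a n * x ^ n :=
  NonarchimedeanAddGroup.summable_of_tendsto_cofinite_zero <| by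
    rw [Nat.cofinite_eq_atTop, tendsto_zero_iff_norm_tendsto_zero]
    exact squeeze_zero (fun n => norm_nonneg _) (norm_mul_pow_le_of_norm_le hx) hconv

theorem norm_tsum_sub_sum_range_le (hconv : Tendsto (fun n => ‖a n‖ * r ^ n) atTop (𝓝 0))
    {x : K} (hx : ‖x‖ ≤ r) {D : ℕ} {B : ℝ} (hB : 0 ≤ B) (hD : ∀ n ≥ D, ‖a n‖ * r ^ n ≤ B) :
    ‖∑' n, a n * x ^ n - ∑ n ∈ Finset.range D, a n * x ^ n‖ ≤ B := by
  rw [← (summable_mul_pow_of_tendsto hconv hx).sum_add_tsum_nat_add D, add_sub_cancel_left]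
  exact IsUltrametricDist.norm_tsum_le_of_forall_le_of_nonneg hB fun n =>
    (norm_mul_pow_le_of_norm_le hx _).trans (hD _ (Nat.le_add_left D n))

theorem exists_forall_norm_tsum_sub_sum_range_le
    (hconv : Tendsto (fun n => ‖a n‖ * r ^ n) atTop (𝓝 0)) {δ : ℝ} (hδ : 0 < δ) (N : ℕ) :
    ∃ D, N < D ∧ ∀ x : K, ‖x‖ ≤ r →
      ‖∑' n, a n * x ^ n - ∑ n ∈ Finset.range D, a n * x ^ n‖ ≤ δ := by
  obtain ⟨D, hD⟩ := eventually_atTop.1 (hconv.eventually (gt_mem_nhds hδ))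
  exact ⟨max D (N + 1), by omega, fun x hx => norm_tsum_sub_sum_range_le hconv hx hδ.le
    fun n hn => (hD n (le_of_max_le_left hn)).le⟩

theorem continuousOn_tsum_mul_pow (hconv : Tendsto (fun n => ‖a n‖ * r ^ n) atTop (𝓝 0)) :
    ContinuousOn (fun x : K => ∑' n, a n * x ^ n) (Metric.closedBall 0 r) := by
  refine TendstoUniformlyOn.continuousOn (F := fun D x => ∑ n ∈ Finset.range D, a n * x ^ n)
    (p := atTop) ?_ (Frequently.of_forall fun D => by fun_prop)
  rw [Metric.tendstoUniformlyOn_iff]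
  intro ε hε
  obtain ⟨D, hD⟩ := eventually_atTop.1 (hconv.eventually (gt_mem_nhds (half_pos hε)))
  refine eventually_atTop.2 ⟨D, fun D' hD' x hx => ?_⟩
  rw [dist_eq_norm]
  exact (norm_tsum_sub_sum_range_le hconv (mem_closedBall_zero_iff.1 hx) (half_pos hε).le
    fun n hn => (hD n (hD'.trans hn)).le).trans_lt (half_lt_self hε)

theorem norm_tsum_mul_pow_eq_of_forall_lt (hconv : Tendsto (fun n => ‖a n‖ * r ^ n) atTop (𝓝 0))
    (hdom : ∀ n ≠ 0, ‖a n‖ * r ^ n < ‖a 0‖) {x : K} (hx : ‖x‖ ≤ r) :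
    ‖∑' n, a n * x ^ n‖ = ‖a 0‖ := by
  have hr : 0 ≤ r := (norm_nonneg x).trans hx
  have ha0 : 0 < ‖a 0‖ := lt_of_le_of_lt (by positivity) (hdom 1 one_ne_zero)
  obtain ⟨D, hD, happrox⟩ := exists_forall_norm_tsum_sub_sum_range_le hconv (half_pos ha0) 0
  have hsum : ‖∑ n ∈ Finset.range D, a n * x ^ n‖ = ‖a 0‖ := by
    rw [IsUltrametricDist.norm_sum_eq_of_forall_ne_lt (Finset.mem_range.2 hD), pow_zero, mul_one]
    intro n _ hn
    simpa using (norm_mul_pow_le_of_norm_le hx n).trans_lt (hdom n hn)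
  have herr := (happrox x hx).trans_lt (half_lt_self ha0)
  rw [← sub_add_cancel (∑' n, a n * x ^ n) (∑ n ∈ Finset.range D, a n * x ^ n),
    IsUltrametricDist.norm_add_eq_max_of_norm_ne_norm (hsum ▸ herr.ne), hsum,
    max_eq_right (hsum ▸ herr.le)]

variable [IsAlgClosed K]

theorem exists_near_norm_tsum_mul_pow_le (hr : 0 < r)
    (hconv : Tendsto (fun n => ‖a n‖ * r ^ n) atTop (𝓝 0)) (ha0 : a 0 ≠ 0) {N : ℕ}
    (hN : N ≠ 0) (hPN : ‖a 0‖ ≤ ‖a N‖ * r ^ N) {M : ℕ} (hM : ∀ n ≥ M, ‖a n‖ * r ^ n < ‖a 0‖)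
    {y : K} (hy : ‖y‖ ≤ r) {η : ℝ} (hη : 0 < η) :
    ∃ w, ‖w‖ ≤ r ∧ ‖∑' n, a n * w ^ n‖ ≤ η ∧
      ‖a 0‖ * ‖w - y‖ ^ M ≤ ‖∑' n, a n * y ^ n‖ * r ^ M := by
  set F : K → K := fun x => ∑' n, a n * x ^ n
  rcases eq_or_ne (F y) 0 with hFy | hFy
  · have hM0 : M ≠ 0 := by rintro rfl; exact (hM N (Nat.zero_le N)).not_ge hPN
    exact ⟨y, hy, by simpa [F, hFy] using hη.le, by simp [F, hFy, hM0]⟩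
  obtain ⟨D, hND, happrox⟩ :=
    exists_forall_norm_tsum_sub_sum_range_le hconv (lt_min hη (norm_pos_iff.2 hFy)) N
  set P := PowerSeries.trunc D (PowerSeries.mk a)
  have hcoeff (n : ℕ) : P.coeff n = if n < D then a n else 0 := by
    simp [P, PowerSeries.coeff_trunc]
  have hP0 : P.coeff 0 = a 0 := by rw [hcoeff, if_pos (by omega)]
  have herr (x : K) (hx : ‖x‖ ≤ r) : ‖F x - P.eval x‖ ≤ min η ‖F y‖ := by
    rw [PowerSeries.eval_trunc_mk]
    exact happrox x hx
  obtain ⟨s, -, hs, w, hwP, hw, hest⟩ := exists_isRoot_near hr (P := P) (hP0 ▸ ha0) hN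
    (by rwa [hP0, hcoeff, if_pos hND]) hy
  have hsM : s ≤ M := by
    by_contra! hMs
    have hle := hs.1 0
    have hlt : ‖P.coeff s‖ * r ^ s < ‖a 0‖ := by
      rw [hcoeff]
      split_ifs
      · exact hM s hMs.le
      · simpa using ha0
    rw [hP0, pow_zero, mul_one] at hle
    exact hlt.not_ge hle
  have hFw : ‖F w‖ ≤ η := by
    simpa [hwP.eq_zero] using (herr w hw).trans (min_le_left _ _)
  have hPy : ‖P.eval y‖ ≤ ‖F y‖ := by
    rw [← sub_sub_cancel (F y) (P.eval y)]
    exact (IsUltrametricDist.norm_sub_le_max _ _).trans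
      (max_le le_rfl ((herr y hy).trans (min_le_right _ _)))
  refine ⟨w, hw, hFw, ?_⟩
  calc ‖a 0‖ * ‖w - y‖ ^ M = ‖P.coeff 0‖ * ‖y - w‖ ^ s * ‖w - y‖ ^ (M - s) := by
        rw [hP0, norm_sub_rev y w, mul_assoc, ← pow_add, Nat.add_sub_cancel' hsM]
    _ ≤ ‖P.eval y‖ * r ^ s * r ^ (M - s) := by
        gcongr
        exact (IsUltrametricDist.norm_sub_le_max w y).trans (max_le hw hy)
    _ ≤ ‖F y‖ * r ^ M := by
        rw [mul_assoc, ← pow_add, Nat.add_sub_cancel' hsM]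
        gcongr

theorem exists_tsum_mul_pow_eq_zero_of_le (hr : 0 < r)
    (hconv : Tendsto (fun n => ‖a n‖ * r ^ n) atTop (𝓝 0)) {N : ℕ} (hN : N ≠ 0)
    (hPN : ‖a 0‖ ≤ ‖a N‖ * r ^ N) : ∃ x : K, ‖x‖ ≤ r ∧ ∑' n, a n * x ^ n = 0 := by
  rcases eq_or_ne (a 0) 0 with ha0 | ha0
  · exact ⟨0, by simpa using hr.le, by rw [tsum_mul_zero_pow, ha0]⟩
  obtain ⟨M, hM⟩ := eventually_atTop.1 (hconv.eventually (gt_mem_nhds (norm_pos_iff.2 ha0)))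
  have hM0 : M ≠ 0 := by rintro rfl; exact (hM N (Nat.zero_le N)).not_ge hPN
  obtain ⟨z, hz, hFz⟩ := exists_mem_eq_zero_of_forall_exists_near Metric.isClosed_closedBall
    (continuousOn_tsum_mul_pow hconv) hM0 (C := r ^ M / ‖a 0‖) (Metric.mem_closedBall_self hr.le)
    fun y hy η hη => by
      rw [mem_closedBall_zero_iff] at hy
      obtain ⟨w, hw, hFw, hwy⟩ := exists_near_norm_tsum_mul_pow_le hr hconv ha0 hN hPN hM hy hη
      refine ⟨w, mem_closedBall_zero_iff.2 hw, hFw, ?_⟩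
      rw [dist_eq_norm, div_mul_eq_mul_div, le_div_iff₀ (norm_pos_iff.2 ha0)]
      linarith
  exact ⟨z, mem_closedBall_zero_iff.1 hz, hFz⟩

end PowerSeriesOnDisc

theorem norm_const_on_disc_of_nonvanishing_power_series_general
    (Cp : Type) [NormedField Cp] [CompleteSpace Cp] [IsUltrametricDist Cp] [IsAlgClosed Cp]
    (a : ℕ → Cp) (r : ℝ) (hr : 0 < r)
    (hconv : Filter.Tendsto (fun n : ℕ => ‖a n‖ * r ^ n) Filter.atTop (nhds 0))
    (hne : ∀ x : Cp, ‖x‖ ≤ r → (∑' n : ℕ, a n * x ^ n) ≠ 0) :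
    ∀ x : Cp, ‖x‖ ≤ r → ‖∑' n : ℕ, a n * x ^ n‖ = ‖a 0‖ := by
  refine fun x hx => norm_tsum_mul_pow_eq_of_forall_lt hconv (fun n hn => ?_) hx
  by_contra! hPN
  obtain ⟨z, hz, hFz⟩ := exists_tsum_mul_pow_eq_zero_of_le hr hconv hn hPN
  exact hne z hz hFz

theorem norm_const_on_disc_of_nonvanishing_power_series
    (p : ℕ) [Fact p.Prime]
    (Qbar : Type) [Field Qbar] [Algebra ℚ_[p] Qbar] [IsAlgClosure ℚ_[p] Qbar]
    (Cp : Type) [NormedField Cp] [CompleteSpace Cp] [IsUltrametricDist Cp] [IsAlgClosed Cp]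
    [Algebra ℚ_[p] Cp] [Algebra Qbar Cp] [IsScalarTower ℚ_[p] Qbar Cp]
    (hQp : Isometry (algebraMap ℚ_[p] Cp))
    (hdense : DenseRange (algebraMap Qbar Cp))
    (a : ℕ → Cp) (r : ℝ) (hr : 0 < r)
    (hconv : Filter.Tendsto (fun n : ℕ => ‖a n‖ * r ^ n) Filter.atTop (nhds 0))
    (hne : ∀ x : Cp, ‖x‖ ≤ r → (∑' n : ℕ, a n * x ^ n) ≠ 0) :
    ∀ x : Cp, ‖x‖ ≤ r → ‖∑' n : ℕ, a n * x ^ n‖ = ‖a 0‖ :=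
  norm_const_on_disc_of_nonvanishing_power_series_general Cp a r hr hconv hne
end
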